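/- With no edge correction and any continuous kernel κ with 0 ≤ κ ≤ κ(0), κ(0) > 0, given a finite nonempty point configuration in a bounded open window W with ℓ(W) > 0, there exists h* ∈ (0,∞) such that T_κ(h*) = ℓ(W); i.e., the criterion F(h) = (T_κ(h) − ℓ(W))² attains the value 0. -/

import Mathlib

open MeasureTheory Set Filter Topology

/-!
Every intensity estimate at a data point contains the diagonal term `κ 0 / h ^ d` and is at most
`#Φ κ 0 / h ^ d`, so `h ^ d / κ 0 ≤ T_κ(h) ≤ #Φ h ^ d / κ 0`. Hence `T_κ` tends to `0` at `0⁺` and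
to `∞` at `∞` (this is where `d ≥ 1` enters), and being continuous on the connected set `(0, ∞)` it
takes every positive value, in particular `ℓ(W)`.
-/

section KernelIntensity

variable {E : Type*} [AddCommGroup E] [Module ℝ E]

/-- `λ̂(x; h)`, with no edge correction. -/
noncomputable def kernelIntensity (κ : E → ℝ) (Φ : Finset E) (d : ℕ) (h : ℝ) (x : E) : ℝ :=
  (h ^ d)⁻¹ * ∑ y ∈ Φ, κ (h⁻¹ • (x - y))

/-- `T_κ(h)`. -/
noncomputable def reciprocalIntensitySum (κ : E → ℝ) (Φ : Finset E) (d : ℕ) (h : ℝ) : ℝ :=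
  ∑ x ∈ Φ, (kernelIntensity κ Φ d h x)⁻¹

variable {κ : E → ℝ} {Φ : Finset E} {x : E}

theorem kernel_zero_le_sum (hκnn : ∀ z, 0 ≤ κ z) (hx : x ∈ Φ) (h : ℝ) :
    κ 0 ≤ ∑ y ∈ Φ, κ (h⁻¹ • (x - y)) := by
  simpa using Finset.single_le_sum (f := fun y => κ (h⁻¹ • (x - y))) (fun y _ => hκnn _) hx

theorem kernel_sum_le_card_mul (hκb : ∀ z, κ z ≤ κ 0) (h : ℝ) :
    ∑ y ∈ Φ, κ (h⁻¹ • (x - y)) ≤ Φ.card * κ 0 := by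
  simpa using Finset.sum_le_sum fun y (_ : y ∈ Φ) => hκb (h⁻¹ • (x - y))

theorem inv_kernelIntensity_eq {d : ℕ} {h : ℝ} :
    (kernelIntensity κ Φ d h x)⁻¹ = h ^ d / ∑ y ∈ Φ, κ (h⁻¹ • (x - y)) := by
  rw [kernelIntensity, mul_inv, inv_inv, div_eq_mul_inv]

theorem pow_div_card_mul_le_inv_kernelIntensity (hκnn : ∀ z, 0 ≤ κ z) (hκb : ∀ z, κ z ≤ κ 0)
    (hκ0 : 0 < κ 0) (hx : x ∈ Φ) (d : ℕ)
    {h : ℝ} (hh : 0 < h) :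
    h ^ d / (Φ.card * κ 0) ≤ (kernelIntensity κ Φ d h x)⁻¹ := by
  rw [inv_kernelIntensity_eq]
  exact div_le_div_of_nonneg_left (by positivity)
    (hκ0.trans_le (kernel_zero_le_sum hκnn hx h)) (kernel_sum_le_card_mul hκb h)

theorem inv_kernelIntensity_le (hκnn : ∀ z, 0 ≤ κ z) (hκ0 : 0 < κ 0) (hx : x ∈ Φ) (d : ℕ) {h : ℝ} (hh : 0 < h) :
    (kernelIntensity κ Φ d h x)⁻¹ ≤ h ^ d / κ 0 := by
  rw [inv_kernelIntensity_eq]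
  exact div_le_div_of_nonneg_left (by positivity) hκ0 (kernel_zero_le_sum hκnn hx h)

theorem pow_div_le_reciprocalIntensitySum (hκnn : ∀ z, 0 ≤ κ z) (hκb : ∀ z, κ z ≤ κ 0)
    (hκ0 : 0 < κ 0) (hΦ : Φ.Nonempty) (d : ℕ)
    {h : ℝ} (hh : 0 < h) :
    h ^ d / κ 0 ≤ reciprocalIntensitySum κ Φ d h := by
  have hcard : (Φ.card : ℝ) ≠ 0 := by exact_mod_cast hΦ.card_pos.ne'
  calc h ^ d / κ 0 = ∑ _x ∈ Φ, h ^ d / (Φ.card * κ 0) := by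
        rw [Finset.sum_const, nsmul_eq_mul, ← mul_div_assoc, mul_div_mul_left _ _ hcard]
    _ ≤ reciprocalIntensitySum κ Φ d h :=
        Finset.sum_le_sum fun x hx => pow_div_card_mul_le_inv_kernelIntensity hκnn hκb hκ0 hx d hh

theorem reciprocalIntensitySum_le (hκnn : ∀ z, 0 ≤ κ z) (hκ0 : 0 < κ 0) (d : ℕ) {h : ℝ} (hh : 0 < h) :
    reciprocalIntensitySum κ Φ d h ≤ Φ.card * (h ^ d / κ 0) := by
  simpa [reciprocalIntensitySum] using
    Finset.sum_le_sum fun x hx => inv_kernelIntensity_le hκnn hκ0 hx d hh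

theorem reciprocalIntensitySum_nonneg (hκnn : ∀ z, 0 ≤ κ z) (d : ℕ) {h : ℝ} (hh : 0 < h) :
    0 ≤ reciprocalIntensitySum κ Φ d h :=
  Finset.sum_nonneg fun x _ => by
    rw [inv_kernelIntensity_eq]
    exact div_nonneg (by positivity) (Finset.sum_nonneg fun y _ => hκnn _)

theorem tendsto_reciprocalIntensitySum_nhdsGT_zero (hκnn : ∀ z, 0 ≤ κ z) (hκ0 : 0 < κ 0) {d : ℕ} (hd : d ≠ 0) :
    Tendsto (reciprocalIntensitySum κ Φ d) (𝓝[>] 0) (𝓝 0) := by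
  have hbound : Tendsto (fun h : ℝ => Φ.card * (h ^ d / κ 0)) (𝓝[>] 0) (𝓝 0) := by
    have := ((continuous_pow d).div_const (κ 0)).const_mul (Φ.card : ℝ)
    simpa [zero_pow hd] using this.tendsto 0 |>.mono_left nhdsWithin_le_nhds
  refine tendsto_of_tendsto_of_tendsto_of_le_of_le' tendsto_const_nhds hbound ?_ ?_ <;>
    filter_upwards [self_mem_nhdsWithin] with h hh
  · exact reciprocalIntensitySum_nonneg hκnn d hh
  · exact reciprocalIntensitySum_le hκnn hκ0 d hh

theorem tendsto_reciprocalIntensitySum_atTop (hκnn : ∀ z, 0 ≤ κ z) (hκb : ∀ z, κ z ≤ κ 0)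
    (hκ0 : 0 < κ 0) (hΦ : Φ.Nonempty) {d : ℕ} (hd : d ≠ 0) :
    Tendsto (reciprocalIntensitySum κ Φ d) atTop atTop :=
  tendsto_atTop_mono' _ (eventually_gt_atTop 0 |>.mono fun _ hh =>
      pow_div_le_reciprocalIntensitySum hκnn hκb hκ0 hΦ d hh)
    ((tendsto_pow_atTop hd).atTop_div_const hκ0)

theorem continuousOn_reciprocalIntensitySum [TopologicalSpace E] [ContinuousSMul ℝ E]
    (hκnn : ∀ z, 0 ≤ κ z) (hκ0 : 0 < κ 0) (hκcont : Continuous κ) (d : ℕ) :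
    ContinuousOn (reciprocalIntensitySum κ Φ d) (Ioi 0) := by
  refine continuousOn_finsetSum _ fun x hx => ?_
  simp_rw [inv_kernelIntensity_eq]
  refine (continuousOn_pow d).div (continuousOn_finsetSum _ fun y _ => ?_) fun h _ => ?_
  · exact hκcont.comp_continuousOn
      ((continuousOn_inv₀.mono fun _ hh => ne_of_gt hh).smul continuousOn_const)
  · exact (hκ0.trans_le (kernel_zero_le_sum hκnn hx h)).ne'

end KernelIntensity

theorem exists_bandwidth_T_eq_measure_general
    {d : ℕ} (hd : 1 ≤ d) (κ : EuclideanSpace ℝ (Fin d) → ℝ)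
    (hκcont : Continuous κ) (hκnn : ∀ z, 0 ≤ κ z) (hκb : ∀ z, κ z ≤ κ 0)
    (hκ0 : 0 < κ 0)
    (W : Set (EuclideanSpace ℝ (Fin d))) (hWpos : 0 < (volume W).toReal)
    (Φ : Finset (EuclideanSpace ℝ (Fin d))) (hΦne : Φ.Nonempty) :
    ∃ hstar : ℝ, 0 < hstar ∧
      (∑ x ∈ Φ, ((hstar ^ d)⁻¹ * ∑ y ∈ Φ, κ (hstar⁻¹ • (x - y)))⁻¹)
        = (volume W).toReal := by
  have hd0 : d ≠ 0 := by omega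
  have hsurj : Ioi 0 ⊆ reciprocalIntensitySum κ Φ d '' Ioi 0 :=
    isPreconnected_Ioi.intermediate_value_Ioi (l₁ := 𝓝[>] 0) inf_le_right
      (le_principal_iff.mpr (Ioi_mem_atTop 0))
      (continuousOn_reciprocalIntensitySum hκnn hκ0 hκcont d)
      (tendsto_reciprocalIntensitySum_nhdsGT_zero hκnn hκ0 hd0)
      (tendsto_reciprocalIntensitySum_atTop hκnn hκb hκ0 hΦne hd0)
  obtain ⟨hstar, hpos, hT⟩ := hsurj hWpos
  exact ⟨hstar, hpos, hT⟩

/-- With no edge correction and a continuous kernel `κ` with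
`0 ≤ κ ≤ κ 0`, `κ 0 > 0`, for a finite nonempty configuration in a bounded open
window `W` with `ℓ(W) > 0`, there is a bandwidth `h* > 0` with `T_κ(h*) = ℓ(W)`;
equivalently the criterion `F(h) = (T_κ(h) − ℓ(W))²` attains the value `0`. -/
theorem exists_bandwidth_T_eq_measure
    {d : ℕ} (hd : 1 ≤ d) (κ : EuclideanSpace ℝ (Fin d) → ℝ)
    (hκcont : Continuous κ) (hκnn : ∀ z, 0 ≤ κ z) (hκb : ∀ z, κ z ≤ κ 0)
    (hκ0 : 0 < κ 0)
    (W : Set (EuclideanSpace ℝ (Fin d))) (hW : IsOpen W)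
    (hWb : Bornology.IsBounded W) (hWpos : 0 < (volume W).toReal)
    (Φ : Finset (EuclideanSpace ℝ (Fin d))) (hΦne : Φ.Nonempty)
    (hΦW : ∀ x ∈ Φ, x ∈ W) :
    ∃ hstar : ℝ, 0 < hstar ∧
      (∑ x ∈ Φ, ((hstar ^ d)⁻¹ * ∑ y ∈ Φ, κ (hstar⁻¹ • (x - y)))⁻¹)
        = (volume W).toReal :=
  exists_bandwidth_T_eq_measure_general hd κ hκcont hκnn hκb hκ0 W hWpos Φ hΦne
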